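/- The elegant joint measurement satisfies the three-ebit localizability condition: for all a₁, a₂, b ∈ {0,X,Y,Z}, the matrix (M_EJM†(I₂⊗σ_b)M_EJM)·(σ_{a₁}⊗σ_{a₂})·(M_EJM†(I₂⊗σ_b)M_EJM) is a permutation matrix with phases. -/

import Mathlib

open Matrix Complex Kronecker

noncomputable section

/-- The identification of `Fin 2 × Fin 2` with `Fin 4`, ordering pairs as 00,01,10,11. -/
def pairEquiv : Fin 2 × Fin 2 ≃ Fin 4 where
  toFun p := ⟨2 * p.1.val + p.2.val, by have h1 := p.1.isLt; have h2 := p.2.isLt; omega⟩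
  invFun k := (⟨k.val / 2, by have := k.isLt; omega⟩, ⟨k.val % 2, by omega⟩)
  left_inv := by decide
  right_inv := by decide

/-- Kronecker product of two 2×2 matrices, as a 4×4 matrix indexed by `Fin 4`
with the ordering 00,01,10,11. -/
def kron (A B : Matrix (Fin 2) (Fin 2) ℂ) : Matrix (Fin 4) (Fin 4) ℂ :=
  Matrix.reindex pairEquiv pairEquiv (A ⊗ₖ B)

def σX : Matrix (Fin 2) (Fin 2) ℂ := !![0, 1; 1, 0]
def σY : Matrix (Fin 2) (Fin 2) ℂ := !![0, -Complex.I; Complex.I, 0]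
def σZ : Matrix (Fin 2) (Fin 2) ℂ := !![1, 0; 0, -1]

/-- The Pauli matrices indexed as σ₀ = I₂, σ₁ = σ_X, σ₂ = σ_Y, σ₃ = σ_Z. -/
def pauli (a : Fin 4) : Matrix (Fin 2) (Fin 2) ℂ :=
  if a = 0 then 1 else if a = 1 then σX else if a = 2 then σY else σZ

/-- A 4×4 complex matrix is a permutation matrix with phases if there is a permutation
`π` of the indices and unit-modulus phases `φ j` with `P (π j) j = φ j` and all other
entries zero. -/
def PermPhase (P : Matrix (Fin 4) (Fin 4) ℂ) : Prop :=
  ∃ (π : Equiv.Perm (Fin 4)) (φ : Fin 4 → ℂ),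
    (∀ j, ‖φ j‖ = 1) ∧ ∀ i j, P i j = if i = π j then φ j else 0

/-- `M` satisfies the three-ebit localizability condition. -/
def ThreeEbitLocal (M : Matrix (Fin 4) (Fin 4) ℂ) : Prop :=
  ∀ a₁ a₂ b : Fin 4,
    PermPhase ((Mᴴ * kron 1 (pauli b) * M) * kron (pauli a₁) (pauli a₂) *
      (Mᴴ * kron 1 (pauli b) * M))

/-- The elegant joint measurement. -/
def M_EJM : Matrix (Fin 4) (Fin 4) ℂ :=
  ((Real.sqrt 8 : ℂ))⁻¹ •
    !![1 + Complex.I, -1 + Complex.I, 1 - Complex.I, -1 - Complex.I;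
       -(2 * Complex.I), 0, 0, -(2 * Complex.I);
       0, 2 * Complex.I, 2 * Complex.I, 0;
       1 - Complex.I, -1 - Complex.I, 1 + Complex.I, -1 + Complex.I]

/-!
Up to the scalar `1/√8`, the elegant joint measurement and the Pauli matrices have entries in
the Gaussian integers, so the matrix of the condition is `1/64` times a Gaussian-integer
matrix `Q`. It is a permutation matrix with phases as soon as every column of `Q` has a single
nonzero entry, of norm `64²`; for the 64 choices of `a₁, a₂, b` this is a finite computation
in `ℤ[i]`, which the kernel carries out.
-/

local notation "ℤ[i]" => GaussianInt

lemma kron_map {R : Type*} [NonAssocSemiring R] (f : R →+* ℂ) (A B : Matrix (Fin 2) (Fin 2) R) :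
    kron (A.map f) (B.map f) = (reindex pairEquiv pairEquiv (A ⊗ₖ B)).map f := by
  ext i j
  simp [kron, kroneckerMap_apply]

lemma GaussianInt.norm_toComplex_of_norm_eq {z : ℤ[i]} {c : ℕ} (h : z.norm = c ^ 2) :
    ‖(z : ℂ)‖ = c := by
  have hsq : ‖(z : ℂ)‖ ^ 2 = (c : ℝ) ^ 2 := by
    rw [Complex.sq_norm, ← GaussianInt.intCast_real_norm, h]
    push_cast
    ring
  exact (pow_left_inj₀ (_root_.norm_nonneg _) c.cast_nonneg two_ne_zero).mp hsq

/-- `Q = c • P` for a permutation matrix with phases `P` (recall `Zsqrtd.norm z = |z|²`). -/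
def IsScaledMonomial (c : ℕ) (Q : Matrix (Fin 4) (Fin 4) ℤ[i]) : Prop :=
  ∃ π : Equiv.Perm (Fin 4),
    ∀ i j, (i = π j → (Q i j).norm = c ^ 2) ∧ (i ≠ π j → Q i j = 0)

instance (c : ℕ) : DecidablePred (IsScaledMonomial c) := fun Q =>
  have : ∀ i j, Decidable (Q i j = 0) := fun _ _ => decEq _ _
  by unfold IsScaledMonomial; infer_instance

lemma permPhase_of_isScaledMonomial {c : ℕ} (hc : c ≠ 0) {Q : Matrix (Fin 4) (Fin 4) ℤ[i]}
    (hQ : IsScaledMonomial c Q) : PermPhase ((c : ℂ)⁻¹ • Q.map GaussianInt.toComplex) := by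
  obtain ⟨π, hπ⟩ := hQ
  refine ⟨π, fun j => (c : ℂ)⁻¹ * Q (π j) j, fun j => ?_, fun i j => ?_⟩
  · rw [norm_mul, norm_inv, Complex.norm_natCast,
      GaussianInt.norm_toComplex_of_norm_eq ((hπ (π j) j).1 rfl)]
    exact inv_mul_cancel₀ (Nat.cast_ne_zero.mpr hc)
  · by_cases hij : i = π j
    · simp [hij]
    · simp [hij, (hπ i j).2 hij]

def pauliInt (a : Fin 4) : Matrix (Fin 2) (Fin 2) ℤ[i] :=
  if a = 0 then 1 else if a = 1 then !![0, 1; 1, 0]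
  else if a = 2 then !![0, ⟨0, -1⟩; ⟨0, 1⟩, 0] else !![1, 0; 0, -1]

def kronInt (A B : Matrix (Fin 2) (Fin 2) ℤ[i]) : Matrix (Fin 4) (Fin 4) ℤ[i] :=
  reindex pairEquiv pairEquiv (A ⊗ₖ B)

def ejmInt : Matrix (Fin 4) (Fin 4) ℤ[i] :=
  !![⟨1, 1⟩, ⟨-1, 1⟩, ⟨1, -1⟩, ⟨-1, -1⟩;
     ⟨0, -2⟩, 0, 0, ⟨0, -2⟩;
     0, ⟨0, 2⟩, ⟨0, 2⟩, 0;
     ⟨1, -1⟩, ⟨-1, -1⟩, ⟨1, 1⟩, ⟨-1, 1⟩]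

def ejmConjInt (b : Fin 4) : Matrix (Fin 4) (Fin 4) ℤ[i] :=
  ejmIntᴴ * kronInt 1 (pauliInt b) * ejmInt

lemma pauli_eq_map (a : Fin 4) : pauli a = (pauliInt a).map GaussianInt.toComplex := by
  fin_cases a <;>
  · ext i j
    fin_cases i <;> fin_cases j <;>
      simp [pauli, pauliInt, σX, σY, σZ, one_apply, GaussianInt.toComplex_def']

lemma kron_pauli_eq_map (a₁ a₂ : Fin 4) :
    kron (pauli a₁) (pauli a₂) =
      (kronInt (pauliInt a₁) (pauliInt a₂)).map GaussianInt.toComplex := by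
  rw [pauli_eq_map, pauli_eq_map, kron_map, kronInt]

lemma M_EJM_eq_smul_map :
    M_EJM = ((√8 : ℝ) : ℂ)⁻¹ • ejmInt.map GaussianInt.toComplex := by
  unfold M_EJM
  congr 1
  ext i j
  fin_cases i <;> fin_cases j <;>
    simp [ejmInt, GaussianInt.toComplex_def'] <;> ring

lemma conjTranspose_M_EJM_eq_smul_map :
    M_EJMᴴ = ((√8 : ℝ) : ℂ)⁻¹ • ejmIntᴴ.map GaussianInt.toComplex := by
  rw [M_EJM_eq_smul_map, conjTranspose_smul,
    conjTranspose_map _ fun z => GaussianInt.toComplex_star z, star_inv₀, Complex.star_def,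
    Complex.conj_ofReal]

lemma ejm_conj_eq_smul_map (b : Fin 4) :
    M_EJMᴴ * kron 1 (pauli b) * M_EJM =
      (8 : ℂ)⁻¹ • (ejmConjInt b).map GaussianInt.toComplex := by
  have hsqrt : ((√8 : ℝ) : ℂ)⁻¹ * ((√8 : ℝ) : ℂ)⁻¹ = (8 : ℂ)⁻¹ := by
    rw [← mul_inv, ← Complex.ofReal_mul, Real.mul_self_sqrt (by norm_num), Complex.ofReal_ofNat]
  have hone : (1 : Matrix (Fin 2) (Fin 2) ℂ) = (1 : Matrix (Fin 2) (Fin 2) ℤ[i]).map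
      GaussianInt.toComplex := (Matrix.map_one _ (map_zero _) (map_one _)).symm
  rw [conjTranspose_M_EJM_eq_smul_map, M_EJM_eq_smul_map, pauli_eq_map, hone, kron_map,
    Matrix.smul_mul, Matrix.smul_mul, Matrix.mul_smul, smul_smul, hsqrt, ← Matrix.map_mul,
    ← Matrix.map_mul, ejmConjInt, kronInt]

lemma isScaledMonomial_ejmConjInt :
    ∀ a₁ a₂ b : Fin 4, IsScaledMonomial 64
      (ejmConjInt b * kronInt (pauliInt a₁) (pauliInt a₂) * ejmConjInt b) := by
  decide

/-- The elegant joint measurement satisfies the three-ebit localizability condition. -/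
theorem ejm_three_ebit_condition : ThreeEbitLocal M_EJM := by
  intro a₁ a₂ b
  have h64 : (8 : ℂ)⁻¹ * (8 : ℂ)⁻¹ = ((64 : ℕ) : ℂ)⁻¹ := by norm_num
  rw [ejm_conj_eq_smul_map, kron_pauli_eq_map, Matrix.smul_mul, Matrix.smul_mul,
    Matrix.mul_smul, smul_smul, h64, ← Matrix.map_mul, ← Matrix.map_mul]
  exact permPhase_of_isScaledMonomial (by norm_num) (isScaledMonomial_ejmConjInt a₁ a₂ b)
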